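/- Lemma (edges below a maximal labeled link). Let d ≥ 3, let s be a syndrome on the toric lattice T_d, let C be a configuration on a decoding tree T_{i,q} for s, and let u — v be a maximal proper labeled link of C whose endpoint v is a vertex of the tree with 3 children. Then at least 2 of the 3 edges joining v to its children are unlabeled. -/

import Mathlib

namespace ToricMS

/-- Checks of the toric lattice: vertices of the `d × d` torus grid. -/
abbrev V (d : ℕ) : Type := ZMod d × ZMod d

/-- The toric lattice `T_d`: two checks are adjacent iff their difference is
`(±1, 0)` or `(0, ±1)` mod `d` (for `d ≥ 3` the inequality clause is automatic). -/
def Toric (d : ℕ) : SimpleGraph (V d) where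
  Adj v w := v ≠ w ∧
    (v - w = (1, 0) ∨ v - w = (-1, 0) ∨ v - w = (0, 1) ∨ v - w = (0, -1))
  symm := ⟨by
    rintro v w ⟨hne, h⟩
    refine ⟨hne.symm, ?_⟩
    have hswap : w - v = -(v - w) := by ring
    rcases h with h | h | h | h <;> rw [hswap, h] <;> simp [Prod.ext_iff]⟩
  loopless := ⟨fun v h => h.1 rfl⟩

/-- Weight of an error: the number of qubits (edges) in error. -/
noncomputable def wt {d : ℕ} (e : (Toric d).edgeSet → ZMod 2) : ℕ :=
  Nat.card {q : (Toric d).edgeSet // e q = 1}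

/-- Syndrome of an error: mod-2 sum of the error over the qubits incident to each check. -/
noncomputable def synd {d : ℕ} (e : (Toric d).edgeSet → ZMod 2) : V d → ZMod 2 :=
  fun c => (Nat.card {q : (Toric d).edgeSet // e q = 1 ∧ c ∈ (q : Sym2 (V d))} : ZMod 2)

/-- A degenerate error: some different error of no larger weight has the same syndrome. -/
def Degenerate {d : ℕ} (e : (Toric d).edgeSet → ZMod 2) : Prop :=
  ∃ e' : (Toric d).edgeSet → ZMod 2, e' ≠ e ∧ wt e' ≤ wt e ∧ synd e' = synd e

/-- The fake syndrome `s^c` having `c` as its only unsatisfied check. -/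
def fakeS (d : ℕ) (c : V d) : V d → ZMod 2 := fun c' => if c' = c then 1 else 0

/-- The error `ε⁴` consisting of 4 consecutive collinear (horizontal) qubits. -/
def eps4 (d : ℕ) : (Toric d).edgeSet → ZMod 2 := fun q =>
  if q.val = Sym2.mk (((0 : ZMod d), (0 : ZMod d)) : V d) ((1, 0) : V d)
      ∨ q.val = Sym2.mk (((1 : ZMod d), (0 : ZMod d)) : V d) ((2, 0) : V d)
      ∨ q.val = Sym2.mk (((2 : ZMod d), (0 : ZMod d)) : V d) ((3, 0) : V d)
      ∨ q.val = Sym2.mk (((3 : ZMod d), (0 : ZMod d)) : V d) ((4, 0) : V d)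
  then 1 else 0

/-- Walk without return (wwr) in `T_d`, as its list of visited checks. -/
def IsWWR (d : ℕ) (l : List (V d)) : Prop :=
  l.Chain' (Toric d).Adj ∧ ∀ j : ℕ, j + 2 < l.length → l[j]? ≠ l[j + 2]?

/-- A walk starting with the root edge `e_q = {a, b}` (either orientation allowed). -/
def StartsQ (d : ℕ) (a b : V d) (l : List (V d)) : Prop :=
  l.take 2 = [a, b] ∨ l.take 2 = [b, a]

/-- Vertices of the decoding tree `T_{i,q}` (`q` the edge `{a,b}`): wwrs of
length `1, …, i` starting with `e_q`, encoded by their check lists. -/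
def IsTreeVertex (d : ℕ) (a b : V d) (i : ℕ) (l : List (V d)) : Prop :=
  IsWWR d l ∧ StartsQ d a b l ∧ 2 ≤ l.length ∧ l.length ≤ i + 1

/-- Edges of the decoding tree `T_{i,q}`: wwrs of length `1, …, i+1` starting with
`e_q` (an edge is identified with the wwr ending with it), where the root edge is
canonically represented by `[a, b]`. -/
def IsTreeEdge (d : ℕ) (a b : V d) (i : ℕ) (l : List (V d)) : Prop :=
  IsWWR d l ∧ StartsQ d a b l ∧ 2 ≤ l.length ∧ l.length ≤ i + 2 ∧
    (l.length = 2 → l = [a, b])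

/-- Dangling edges: tree edges at maximal depth, with a single endpoint in the tree. -/
def IsDangling (d : ℕ) (a b : V d) (i : ℕ) (l : List (V d)) : Prop :=
  IsTreeEdge d a b i l ∧ l.length = i + 2

/-- The check of `T_d` associated with a tree vertex. -/
def vcheck {d : ℕ} (l : List (V d)) : V d := l.getLastD 0

/-- Incidence between a tree vertex and a tree edge. -/
def IncidentVE {d : ℕ} (lv le : List (V d)) : Prop :=
  lv = le ∨ lv = le.dropLast ∨ (le.length = 2 ∧ lv = le.reverse)

/-- A configuration on the decoding tree for syndrome `s`: an edge labelling such
that around every tree vertex, the mod-2 sum of the labels of the incident edges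
equals the syndrome value of the associated check. -/
def IsConfig (d : ℕ) (a b : V d) (i : ℕ) (s : V d → ZMod 2)
    (C : List (V d) → ZMod 2) : Prop :=
  ∀ lv, IsTreeVertex d a b i lv →
    (Nat.card {le : List (V d) //
        IsTreeEdge d a b i le ∧ IncidentVE lv le ∧ C le = 1} : ZMod 2) = s (vcheck lv)

/-- Weight of a configuration: its number of labeled tree edges. -/
noncomputable def cweight (d : ℕ) (a b : V d) (i : ℕ) (C : List (V d) → ZMod 2) : ℕ :=
  Nat.card {le : List (V d) // IsTreeEdge d a b i le ∧ C le = 1}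

/-- Minimal weight of a configuration whose root edge has label `r`. -/
noncomputable def minW (d : ℕ) (a b : V d) (i : ℕ) (s : V d → ZMod 2) (r : ZMod 2) : ℕ :=
  sInf {n : ℕ | ∃ C : List (V d) → ZMod 2,
    IsConfig d a b i s C ∧ C [a, b] = r ∧ cweight d a b i C = n}

/-- A posteriori value of the (oriented) qubit `(a,b)` at iteration `i` computed by
min-sum (Wiberg): minimal root-labeled weight minus minimal root-unlabeled weight. -/
noncomputable def APPo (d : ℕ) (s : V d → ZMod 2) (i : ℕ) (a b : V d) : ℤ :=
  (minW d a b i s 1 : ℤ) - (minW d a b i s 0 : ℤ)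

/-- A posteriori value of a qubit (an unordered edge) at iteration `i`. -/
noncomputable def APP (d : ℕ) (s : V d → ZMod 2) (i : ℕ) : Sym2 (V d) → ℤ :=
  Sym2.lift ⟨fun a b => min (APPo d s i a b) (APPo d s i b a), fun _ _ => min_comm _ _⟩

/-- The MS hard-decision estimate at iteration `i`. -/
noncomputable def hatE (d : ℕ) (s : V d → ZMod 2) (i : ℕ) : (Toric d).edgeSet → ZMod 2 :=
  fun q => if APP d s i q.val < 0 then 1 else 0

/-- `s` is decoded by MS in `k` iterations: the estimate satisfies the syndrome at
iteration `k` and not before. -/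
def DecodedIn (d : ℕ) (s : V d → ZMod 2) (k : ℕ) : Prop :=
  1 ≤ k ∧ synd (hatE d s k) = s ∧ ∀ j, 1 ≤ j → j < k → synd (hatE d s j) ≠ s

/-- The error `e` is correctly decoded by MS. -/
def CorrectlyDecoded {d : ℕ} (e : (Toric d).edgeSet → ZMod 2) : Prop :=
  ∃ k, DecodedIn d (synd e) k ∧ hatE d (synd e) k = e

/-- Length of the longest common prefix of two lists. -/
def cpl {d : ℕ} : List (V d) → List (V d) → ℕ
  | x :: xs, y :: ys => if x = y then cpl xs ys + 1 else 0
  | _, _ => 0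

/-- Distance (number of edges of the connecting path) between two tree vertices. -/
def treeDist {d : ℕ} (lu lv : List (V d)) : ℕ :=
  if lu.take 2 = lv.take 2 then lu.length + lv.length - 2 * cpl lu lv
  else lu.length + lv.length - 3

/-- Strip a dangling edge down to its unique endpoint vertex. -/
def stripD {d : ℕ} (i : ℕ) (l : List (V d)) : List (V d) :=
  if l.length = i + 2 then l.dropLast else l

/-- `le` is an edge on the (unique) tree path between tree vertices `lu` and `lv`. -/
def OnPathVV {d : ℕ} (lu lv le : List (V d)) : Prop :=
  if lu.take 2 = lv.take 2 then (le <+: lu ∨ le <+: lv) ∧ cpl lu lv < le.length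
  else ((le <+: lu ∨ le <+: lv) ∧ 3 ≤ le.length) ∨ le.length = 2

/-- `lw` is a vertex on the (unique) tree path between tree vertices `lu` and `lv`. -/
def OnPathVertexVV {d : ℕ} (lu lv lw : List (V d)) : Prop :=
  if lu.take 2 = lv.take 2 then (lw <+: lu ∨ lw <+: lv) ∧ cpl lu lv ≤ lw.length
  else (lw <+: lu ∨ lw <+: lv) ∧ 2 ≤ lw.length

/-- A link of the decoding tree `T_{i,q}` for syndrome `s`: a path in the tree
whose vertex endpoints (if any) are associated with unsatisfied checks; an
endpoint is either a tree vertex or a dangling edge. -/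
structure Link (d : ℕ) (a b : V d) (i : ℕ) (s : V d → ZMod 2) where
  endA : List (V d)
  endB : List (V d)
  hA : IsTreeVertex d a b i endA ∨ IsDangling d a b i endA
  hB : IsTreeVertex d a b i endB ∨ IsDangling d a b i endB
  hAu : IsTreeVertex d a b i endA → s (vcheck endA) = 1
  hBu : IsTreeVertex d a b i endB → s (vcheck endB) = 1
  hne : endA ≠ endB

variable {d : ℕ} {a b : V d} {i : ℕ} {s : V d → ZMod 2}

/-- The tree edges lying on a link. -/
def Link.on (L : Link d a b i s) (le : List (V d)) : Prop :=
  OnPathVV (stripD i L.endA) (stripD i L.endB) le ∨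
    (L.endA.length = i + 2 ∧ le = L.endA) ∨ (L.endB.length = i + 2 ∧ le = L.endB)

/-- The length (number of edges) of a link. -/
def Link.len (L : Link d a b i s) : ℕ :=
  treeDist (stripD i L.endA) (stripD i L.endB) +
    (if L.endA.length = i + 2 then 1 else 0) + (if L.endB.length = i + 2 then 1 else 0)

/-- A proper link: both endpoints are (unsatisfied) tree vertices. -/
def Link.Proper (L : Link d a b i s) : Prop :=
  IsTreeVertex d a b i L.endA ∧ IsTreeVertex d a b i L.endB

/-- A labeled link (w.r.t. a configuration `C`): all its edges are labeled. -/
def Link.IsLabeled (L : Link d a b i s) (C : List (V d) → ZMod 2) : Prop :=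
  ∀ le, IsTreeEdge d a b i le → L.on le → C le = 1

/-- A maximal labeled link: it cannot be extended into a longer labeled link. -/
def Link.IsMaxLabeled (L : Link d a b i s) (C : List (V d) → ZMod 2) : Prop :=
  L.IsLabeled C ∧
    ∀ L' : Link d a b i s, L'.IsLabeled C → (∀ le, L.on le → L'.on le) → L'.len ≤ L.len

/-- An `I`-link: a proper link of length 4 not containing the root, descending
four levels of the tree. -/
def Link.IsI (L : Link d a b i s) : Prop :=
  L.Proper ∧ L.len = 4 ∧ ¬ L.on [a, b] ∧
    (L.endA.length + 4 = L.endB.length ∨ L.endB.length + 4 = L.endA.length)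

/-- A `Γ`-link: a proper link of length 4 not containing the root, going up one
level then down three. -/
def Link.IsGamma (L : Link d a b i s) : Prop :=
  L.Proper ∧ L.len = 4 ∧ ¬ L.on [a, b] ∧
    (L.endA.length + 2 = L.endB.length ∨ L.endB.length + 2 = L.endA.length)

/-- A `Λ`-link: a proper link of length 4 not containing the root, going up two
levels then down two (its endpoints are at the same depth). -/
def Link.IsLambda (L : Link d a b i s) : Prop :=
  L.Proper ∧ L.len = 4 ∧ ¬ L.on [a, b] ∧ L.endA.length = L.endB.length

/-- Distance of a tree vertex to the bottom: minimal length of a path starting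
at that vertex and ending with a dangling edge. -/
noncomputable def distToBottom (d : ℕ) (a b : V d) (i : ℕ) (lv : List (V d)) : ℕ :=
  sInf {n : ℕ | ∃ le, IsDangling d a b i le ∧ n = treeDist lv le.dropLast + 1}

/-- A walk in the decoding tree: a sequence of tree edges `es` together with the
sequence `vs` of tree vertices through which consecutive edges are traversed. -/
structure TreeWalk (d : ℕ) (a b : V d) (i : ℕ) where
  es : List (List (V d))
  vs : List (List (V d))
  hlen : vs.length + 1 = es.length
  hes : ∀ le ∈ es, IsTreeEdge d a b i le
  hvs : ∀ lv ∈ vs, IsTreeVertex d a b i lv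
  hinc : ∀ (j : ℕ) (hj : j < vs.length),
    IncidentVE (vs[j]'hj) (es[j]'(by omega)) ∧ IncidentVE (vs[j]'hj) (es[j + 1]'(by omega))
  htrav : ∀ (j : ℕ) (hj : j + 1 < vs.length), vs[j]'(by omega) ≠ vs[j + 1]'hj

/-- The four unit directions of the square lattice. -/
def dirVec (d : ℕ) : Fin 4 → V d := ![(1, 0), (0, 1), (-1, 0), (0, -1)]

/-- A rigid embedding of a patch `K` of `T_d` into `T_{d'}`: an injective map
which, up to a fixed symmetry `g` of the square (an element of the dihedral
group acting on the four directions), preserves the local square-lattice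
structure — hence it is an injective graph homomorphism mapping plaquettes to
plaquettes. -/
def IsRigidEmbed (d d' : ℕ) (K : Set (V d)) (φ : V d → V d') : Prop :=
  Set.InjOn φ K ∧ ∃ g : Fin 4 → Fin 4, Function.Bijective g ∧
    (∀ j, g (j + 2) = g j + 2) ∧
    ∀ x ∈ K, ∀ j : Fin 4, x + dirVec d j ∈ K →
      φ (x + dirVec d j) = φ x + dirVec d' (g j)

/-- The embedding of a syndrome under an embedding map `φ`. -/
noncomputable def embedSynd (d d' : ℕ) (s : V d → ZMod 2) (φ : V d → V d') :
    V d' → ZMod 2 :=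
  fun c' => @ite _ (∃ c, s c = 1 ∧ φ c = c') (Classical.propDecidable _) 1 0


/-! ### Auxiliary lemmas -/

section CplLemmas
variable {d : ℕ}

theorem cpl_le_left : ∀ u v : List (V d), cpl u v ≤ u.length
  | [], _ => by simp [cpl]
  | _ :: _, [] => by simp [cpl]
  | x :: xs, y :: ys => by
    by_cases h : x = y
    · simpa [cpl, h] using cpl_le_left xs ys
    · simp [cpl, h]

theorem cpl_le_right : ∀ u v : List (V d), cpl u v ≤ v.length
  | [], _ => by simp [cpl]
  | _ :: _, [] => by simp [cpl]
  | x :: xs, y :: ys => by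
    by_cases h : x = y
    · simpa [cpl, h] using cpl_le_right xs ys
    · simp [cpl, h]

theorem le_cpl : ∀ (u v : List (V d)) (k : ℕ), k ≤ u.length → k ≤ v.length →
    u.take k = v.take k → k ≤ cpl u v
  | _, _, 0, _, _, _ => Nat.zero_le _
  | [], _, k + 1, h1, _, _ => by simp at h1
  | _ :: _, [], k + 1, _, h2, _ => by simp at h2
  | x :: xs, y :: ys, k + 1, h1, h2, h3 => by
    simp only [List.take_succ_cons, List.cons.injEq] at h3
    obtain ⟨rfl, h3⟩ := h3
    simp only [cpl, if_pos rfl]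
    exact Nat.succ_le_succ (le_cpl xs ys k (by simpa using h1) (by simpa using h2) h3)

theorem take_cpl_eq : ∀ u v : List (V d), u.take (cpl u v) = v.take (cpl u v)
  | [], v => by simp [cpl]
  | _ :: _, [] => by simp [cpl]
  | x :: xs, y :: ys => by
    by_cases h : x = y
    · subst h
      simp only [cpl, if_true, List.take_succ_cons, List.cons.injEq, eq_self_iff_true,
        true_and, if_pos]
      exact take_cpl_eq xs ys

    · simp [cpl, h]

theorem take_eq_of_le_cpl {u v : List (V d)} {k : ℕ} (h : k ≤ cpl u v) :
    u.take k = v.take k := by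
  calc u.take k = (u.take (cpl u v)).take k := by rw [List.take_take, min_eq_left h]
  _ = (v.take (cpl u v)).take k := by rw [take_cpl_eq]
  _ = v.take k := by rw [List.take_take, min_eq_left h]

theorem getElem_cpl_ne : ∀ (u v : List (V d)) (h1 : cpl u v < u.length)
    (h2 : cpl u v < v.length), u[cpl u v]'h1 ≠ v[cpl u v]'h2
  | [], _, h1, _ => by simp [cpl] at h1
  | _ :: _, [], _, h2 => by simp [cpl] at h2
  | x :: xs, y :: ys, h1, h2 => by
    by_cases h : x = y
    · subst h
      have e : cpl (x :: xs) (x :: ys) = cpl xs ys + 1 := by simp [cpl]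
      rw [e] at h1 h2
      have := getElem_cpl_ne xs ys (by simpa using h1) (by simpa using h2)
      simpa [e] using this
    · have e : cpl (x :: xs) (y :: ys) = 0 := by simp [cpl, h]
      simpa [e] using h

theorem cpl_prefix_left {u v : List (V d)} (h : u <+: v) : cpl u v = u.length :=
  le_antisymm (cpl_le_left u v)
    (le_cpl u v _ le_rfl h.length_le
      (by rw [List.take_length]; exact List.prefix_iff_eq_take.mp h))

theorem cpl_prefix_right {u v : List (V d)} (h : v <+: u) : cpl u v = v.length :=
  le_antisymm (cpl_le_right u v)
    (le_cpl u v _ h.length_le le_rfl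
      (by rw [List.take_length]; exact (List.prefix_iff_eq_take.mp h).symm))

theorem take_eq_of_prefix {u v : List (V d)} (h : u <+: v) {k : ℕ} (hk : k ≤ u.length) :
    u.take k = v.take k := by
  conv_lhs => rw [List.prefix_iff_eq_take.mp h]
  rw [List.take_take, min_eq_left hk]

theorem cpl_grow_eq {u v w : List (V d)} (hvw : v <+: w) (hlt : cpl u v < v.length) :
    cpl u w = cpl u v := by
  have hcu := cpl_le_left u v
  have hle : cpl u v ≤ cpl u w := by
    refine le_cpl _ _ _ hcu (hlt.le.trans hvw.length_le) ?_
    rw [take_eq_of_le_cpl (le_refl (cpl u v))]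
    exact take_eq_of_prefix hvw hlt.le
  refine le_antisymm ?_ hle
  by_contra hcon
  push_neg at hcon
  have hsucc : cpl u v + 1 ≤ cpl u w := hcon
  have htk : u.take (cpl u v + 1) = w.take (cpl u v + 1) := take_eq_of_le_cpl hsucc
  have hcu' : cpl u v < u.length := lt_of_lt_of_le hsucc (cpl_le_left u w)
  have hcw : cpl u v < w.length := lt_of_lt_of_le hlt hvw.length_le
  have huw : u[cpl u v]'hcu' = w[cpl u v]'hcw := by
    have h1 : (u.take (cpl u v + 1))[cpl u v]'(by simp; omega) =
        (w.take (cpl u v + 1))[cpl u v]'(by simp; omega) := by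
      congr 1
    simpa [List.getElem_take] using h1
  have hvw' : v[cpl u v]'hlt = w[cpl u v]'hcw := hvw.getElem hlt
  exact getElem_cpl_ne u v hcu' hlt (huw.trans hvw'.symm)

end CplLemmas


section Geometry
variable {d : ℕ}

theorem zmod_one_ne_zero (hd : 3 ≤ d) : (1 : ZMod d) ≠ 0 := by
  haveI : NeZero d := ⟨by omega⟩
  intro h
  have h1 : ((1 : ℕ) : ZMod d) = 0 := by exact_mod_cast h
  rw [ZMod.natCast_eq_zero_iff] at h1
  have := Nat.le_of_dvd one_pos h1
  omega

theorem zmod_one_ne_neg_one (hd : 3 ≤ d) : (1 : ZMod d) ≠ -1 := by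
  haveI : NeZero d := ⟨by omega⟩
  intro h
  have h2 : ((2 : ℕ) : ZMod d) = 0 := by push_cast; linear_combination h
  rw [ZMod.natCast_eq_zero_iff] at h2
  have := Nat.le_of_dvd two_pos h2
  omega

theorem zmod_neg_one_ne_zero (hd : 3 ≤ d) : (-1 : ZMod d) ≠ 0 := by
  intro h
  exact zmod_one_ne_zero hd (by linear_combination -h)

theorem addDir_injective (hd : 3 ≤ d) (ℓ : V d) :
    Function.Injective (fun j : Fin 4 => ℓ + dirVec d j) := by
  have h10 := zmod_one_ne_zero hd
  have h1m := zmod_one_ne_neg_one hd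
  have hm0 := zmod_neg_one_ne_zero hd
  intro j k h
  simp only [add_right_inj] at h
  fin_cases j <;> fin_cases k <;> simp_all [dirVec, Prod.ext_iff]

theorem adj_add_dir (hd : 3 ≤ d) (ℓ : V d) (j : Fin 4) :
    (Toric d).Adj ℓ (ℓ + dirVec d j) := by
  have h10 := zmod_one_ne_zero hd
  have hm0 := zmod_neg_one_ne_zero hd
  show ℓ ≠ ℓ + dirVec d j ∧ _
  constructor
  · intro h
    have h0 : dirVec d j = 0 := by
      have := congrArg (fun t => t - ℓ) h
      simpa using this.symm
    fin_cases j <;> simp [dirVec, Prod.ext_iff] at h0 <;> tauto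
  · have e : ℓ - (ℓ + dirVec d j) = -dirVec d j := by ring
    rw [e]
    fin_cases j <;> simp [dirVec, Prod.ext_iff]

theorem exists_dir_of_adj {ℓ x : V d} (h : (Toric d).Adj ℓ x) :
    ∃ j : Fin 4, x = ℓ + dirVec d j := by
  have key : ∀ y : V d, ℓ - x = y → x = ℓ + (-y) := fun y hy => by linear_combination -hy
  rcases (show ℓ ≠ x ∧ (ℓ - x = (1, 0) ∨ ℓ - x = (-1, 0) ∨ ℓ - x = (0, 1) ∨ ℓ - x = (0, -1)) from h).2 with h' | h' | h' | h'
  · exact ⟨2, by rw [key _ h']; simp [dirVec, Prod.ext_iff]⟩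
  · exact ⟨0, by rw [key _ h']; simp [dirVec, Prod.ext_iff]⟩
  · exact ⟨3, by rw [key _ h']; simp [dirVec, Prod.ext_iff]⟩
  · exact ⟨1, by rw [key _ h']; simp [dirVec, Prod.ext_iff]⟩

end Geometry

section TreeLemmas
variable {d : ℕ} {a b : V d} {i : ℕ}

theorem eq_dropLast_append : ∀ l : List (V d), l = l.dropLast ++ l.getLast?.toList
  | [] => rfl
  | [x] => rfl
  | x :: y :: ys => by
    have := eq_dropLast_append (y :: ys)
    simpa [List.dropLast_cons₂] using this

theorem child_edge {v : List (V d)} (hv : IsTreeVertex d a b i v) {x : V d}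
    (hadj : (Toric d).Adj (v[v.length - 1]'(by have := hv.2.2.1; omega)) x)
    (hnex : x ≠ v[v.length - 2]'(by have := hv.2.2.1; omega)) :
    IsTreeEdge d a b i (v ++ [x]) := by
  obtain ⟨⟨hch, hnr⟩, hst, hlen2, hleni⟩ := hv
  refine ⟨⟨?_, ?_⟩, ?_, by simp; omega, by simp; omega, by simp; omega⟩
  · simp only [List.Chain', List.isChain_iff_getElem] at hch ⊢
    intro k hk
    simp only [List.length_append, List.length_cons, List.length_nil] at hk
    rcases Nat.lt_or_ge k (v.length - 1) with hk' | hk'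
    · rw [List.getElem_append_left (by omega), List.getElem_append_left (by omega)]
      have := hch k (by omega)
      simpa using this
    · have hk2 : k = v.length - 1 := by omega
      subst hk2
      rw [List.getElem_append_left (by omega)]
      have h2 : v.length - 1 + 1 = v.length := by omega
      have : (v ++ [x])[v.length - 1 + 1]'(by simp; omega) = x := by
        simp only [h2]
        exact List.getElem_concat_length rfl (by simp)
      rw [this]
      exact hadj
  · intro j hj
    simp only [List.length_append, List.length_cons, List.length_nil] at hj
    rcases Nat.lt_or_ge (j + 2) v.length with hj' | hj'
    · rw [List.getElem?_append_left (by omega), List.getElem?_append_left (by omega)]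
      exact hnr j hj'
    · have hj2 : j + 2 = v.length := by omega
      rw [List.getElem?_append_left (by omega : j < v.length),
        List.getElem?_append_right (by omega : v.length ≤ j + 2)]
      have e1 : v[j]? = some (v[j]'(by omega)) := List.getElem?_eq_getElem (by omega)
      have e2 : [x][j + 2 - v.length]? = some x := by
        have : j + 2 - v.length = 0 := by omega
        rw [this]; rfl
      rw [e1, e2]
      intro hcon
      apply hnex
      have : v[j]'(by omega) = x := by simpa using hcon
      rw [← this]
      congr 1
      omega
  · rcases hst with h | h
    · left
      rw [List.take_append, h]
      have : 2 - v.length = 0 := by omega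
      rw [this]
      simp
    · right
      rw [List.take_append, h]
      have : 2 - v.length = 0 := by omega
      rw [this]
      simp

theorem edge_to_vertex {l : List (V d)} (h : IsTreeEdge d a b i l)
    (hl : l.length ≤ i + 1) : IsTreeVertex d a b i l :=
  ⟨h.1, h.2.1, h.2.2.1, hl⟩

theorem incident_elim {lv le : List (V d)} (h3 : 3 ≤ lv.length)
    (h : IncidentVE lv le) : le = lv ∨ le.dropLast = lv := by
  rcases h with h | h | ⟨h1, h2⟩
  · exact Or.inl h.symm
  · exact Or.inr h.symm
  · have : lv.length = 2 := by rw [h2]; simpa using h1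
    omega

end TreeLemmas


section Descent
variable {d : ℕ} {a b : V d} {i : ℕ} {s : V d → ZMod 2} {C : List (V d) → ZMod 2}

theorem card_eq_one_of_unique {α : Type*} {P : α → Prop} (w : α) (hw : P w)
    (huniq : ∀ x, P x → x = w) : Nat.card {x // P x} = 1 :=
  Nat.card_eq_one_iff_unique.mpr
    ⟨⟨fun x y => Subtype.ext ((huniq _ x.2).trans (huniq _ y.2).symm)⟩, ⟨⟨w, hw⟩⟩⟩

theorem prefix_sandwich {w le : List (V d)} (h1 : w <+: le) (h2 : le <+: w) : le = w :=
  h2.eq_of_length (le_antisymm h2.length_le h1.length_le)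

theorem descend (hC : IsConfig d a b i s C) :
    ∀ (n : ℕ) (w : List (V d)), i + 2 - w.length ≤ n → IsTreeEdge d a b i w →
    C w = 1 → 3 ≤ w.length →
    ∃ z, w <+: z ∧ IsTreeEdge d a b i z ∧ C z = 1 ∧
      (∀ le, w <+: le → le <+: z → C le = 1) ∧
      (z.length = i + 2 ∨ (z.length ≤ i + 1 ∧ s (vcheck z) = 1)) := by
  intro n
  induction n with
  | zero =>
    intro w hn hw hCw h3
    have hlen : w.length = i + 2 := by have := hw.2.2.2.1; omega
    exact ⟨w, List.prefix_refl w, hw, hCw,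
      fun le h1 h2 => by rw [prefix_sandwich h1 h2]; exact hCw, Or.inl hlen⟩
  | succ n ih =>
    intro w hn hw hCw h3
    by_cases hlen : w.length = i + 2
    · exact ⟨w, List.prefix_refl w, hw, hCw,
        fun le h1 h2 => by rw [prefix_sandwich h1 h2]; exact hCw, Or.inl hlen⟩
    have hle : w.length ≤ i + 1 := by have := hw.2.2.2.1; omega
    have hwv : IsTreeVertex d a b i w := edge_to_vertex hw hle
    by_cases hs : s (vcheck w) = 1
    · exact ⟨w, List.prefix_refl w, hw, hCw,
        fun le h1 h2 => by rw [prefix_sandwich h1 h2]; exact hCw,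
        Or.inr ⟨hle, hs⟩⟩
    -- there must be a labeled child
    have hchild : ∃ le, IsTreeEdge d a b i le ∧ le.dropLast = w ∧ C le = 1 := by
      by_contra hno
      have hcard : Nat.card {le : List (V d) //
          IsTreeEdge d a b i le ∧ IncidentVE w le ∧ C le = 1} = 1 := by
        refine card_eq_one_of_unique w ⟨hw, Or.inl rfl, hCw⟩ ?_
        rintro x ⟨hx1, hx2, hx3⟩
        rcases incident_elim h3 hx2 with h | h
        · exact h
        · exact absurd ⟨x, hx1, h, hx3⟩ hno
      have := hC w hwv
      rw [hcard] at this
      exact hs (by simpa using this.symm)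
    obtain ⟨le, hle1, hle2, hle3⟩ := hchild
    have hlene : le ≠ [] := by
      intro h; rw [h] at hle1; have := hle1.2.2.1; simp at this
    have hlew : w <+: le := by
      conv_rhs => rw [eq_dropLast_append le]
      rw [hle2]
      exact List.prefix_append w _
    have hlenle : le.length = w.length + 1 := by
      have h1 : le.dropLast.length = le.length - 1 := List.length_dropLast
      have h2 : 0 < le.length := List.length_pos_iff.mpr hlene
      rw [hle2] at h1
      omega
    obtain ⟨z, hz1, hz2, hz3, hz4, hz5⟩ :=
      ih le (by omega) hle1 hle3 (by omega)
    refine ⟨z, hlew.trans hz1, hz2, hz3, ?_, hz5⟩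
    intro le' h1 h2
    rcases Nat.lt_or_ge w.length le'.length with h' | h'
    · exact hz4 le' (List.prefix_of_prefix_length_le hz1 h2 (by omega)) h2
    · have : w = le' := h1.eq_of_length (le_antisymm h1.length_le h')
      rw [← this]
      exact hCw

end Descent


section MainConstruction
variable {d : ℕ} {a b : V d} {i : ℕ} {s : V d → ZMod 2} {C : List (V d) → ZMod 2}

theorem no_labeled_child (hC : IsConfig d a b i s C)
    (L : Link d a b i s) (hmax : L.IsMaxLabeled C) (hprop : L.Proper)
    {x : V d} (hedge : IsTreeEdge d a b i (L.endB ++ [x]))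
    (hlab : C (L.endB ++ [x]) = 1)
    (hnpu : ¬ (L.endB ++ [x] <+: L.endA)) : False := by
  obtain ⟨hu, hv⟩ := hprop
  set u := L.endA with hudef
  set v := L.endB with hvdef
  have hul2 : 2 ≤ u.length := hu.2.2.1
  have huli : u.length ≤ i + 1 := hu.2.2.2
  have hvl2 : 2 ≤ v.length := hv.2.2.1
  have hvli : v.length ≤ i + 1 := hv.2.2.2
  obtain ⟨z, hwz, hzedge, hCz, hint, hend⟩ :=
    descend hC (i + 2) (v ++ [x]) (by omega) hedge hlab (by simp; omega)
  have hzlen : v.length + 1 ≤ z.length := by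
    have := hwz.length_le; simp at this; omega
  have hzlen2 : z.length ≤ i + 2 := hzedge.2.2.2.1
  have hvz : v <+: z := (List.prefix_append v [x]).trans hwz
  have hne : u ≠ z := fun h => hnpu (by rw [h]; exact hwz)
  have hBu' : IsTreeVertex d a b i z → s (vcheck z) = 1 := by
    intro hvert
    rcases hend with h | h
    · have := hvert.2.2.2; omega
    · exact h.2
  have hB' : IsTreeVertex d a b i z ∨ IsDangling d a b i z := by
    by_cases hdang : z.length = i + 2
    · exact Or.inr ⟨hzedge, hdang⟩
    · exact Or.inl (edge_to_vertex hzedge (by omega))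
  set L' : Link d a b i s := ⟨u, z, Or.inl hu, hB', L.hAu, hBu', hne⟩ with hL'def
  have hsu : stripD i u = u := by rw [stripD, if_neg (by omega)]
  have hsv : stripD i v = v := by rw [stripD, if_neg (by omega)]
  set w' := stripD i z with hw'def
  have hw'cases : (z.length = i + 2 ∧ w' = z.dropLast) ∨ (z.length ≠ i + 2 ∧ w' = z) := by
    by_cases hdang : z.length = i + 2
    · exact Or.inl ⟨hdang, by rw [hw'def, stripD, if_pos hdang]⟩
    · exact Or.inr ⟨hdang, by rw [hw'def, stripD, if_neg hdang]⟩
  set ifz : ℕ := if z.length = i + 2 then 1 else 0 with hifzdef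
  have hifz : ifz ≤ 1 := by rw [hifzdef]; split <;> omega
  have hw'pre : w' <+: z := by
    rcases hw'cases with ⟨_, h⟩ | ⟨_, h⟩
    · rw [h]; exact List.dropLast_prefix z
    · rw [h]
  have hw'len : w'.length + ifz = z.length := by
    rcases hw'cases with ⟨h1, h2⟩ | ⟨h1, h2⟩ <;>
      rw [hifzdef, h2] <;> simp [h1, List.length_dropLast] <;> omega
  have hvlenw' : v.length ≤ w'.length := by omega
  have hvw' : v <+: w' := List.prefix_of_prefix_length_le hvz hw'pre hvlenw'
  have hmid : ∀ le, le <+: w' → v.length < le.length → C le = 1 := by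
    intro le h1 h2
    refine hint le (List.prefix_of_prefix_length_le hwz (h1.trans hw'pre) ?_) (h1.trans hw'pre)
    simp; omega
  set c := cpl u v with hcdef
  have hcu : c ≤ u.length := cpl_le_left u v
  have hcv : c ≤ v.length := cpl_le_right u v
  have hcw' : cpl u w' = c := by
    rcases Nat.lt_or_ge c v.length with hlt | hge
    · exact cpl_grow_eq hvw' hlt
    · have hceq : c = v.length := le_antisymm hcv hge
      have hvu : v <+: u := by
        rw [List.prefix_iff_eq_take]
        have h := take_eq_of_le_cpl (le_refl (cpl u v))
        rw [← hcdef, hceq] at h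
        rw [h]
        simp
      rcases Nat.eq_or_lt_of_le hvlenw' with heq | hlt'
      · have hveq : v = w' := hvw'.eq_of_length heq
        rw [← hveq]
      · have hwxw' : v ++ [x] <+: w' :=
          List.prefix_of_prefix_length_le hwz hw'pre (by simp; omega)
        refine le_antisymm ?_ ?_
        · by_contra hcon
          push_neg at hcon
          rw [hceq] at hcon
          have htk : u.take (v.length + 1) = w'.take (v.length + 1) :=
            take_eq_of_le_cpl hcon
          have hxw : v ++ [x] = w'.take (v.length + 1) := by
            have h := List.prefix_iff_eq_take.mp hwxw'
            simpa using h
          exact hnpu (by rw [hxw, ← htk]; exact List.take_prefix _ u)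
        · rw [hceq]
          refine le_cpl u w' v.length hvu.length_le hvlenw' ?_
          rw [← List.prefix_iff_eq_take.mp hvu]
          exact List.prefix_iff_eq_take.mp hvw'
  have hw'2 : w'.take 2 = v.take 2 := (take_eq_of_prefix hvw' (by omega)).symm
  have hLon : ∀ le, L.on le ↔ OnPathVV u v le := by
    intro le
    show (OnPathVV (stripD i u) (stripD i v) le ∨
      (u.length = i + 2 ∧ le = u) ∨ (v.length = i + 2 ∧ le = v)) ↔ _
    rw [hsu, hsv]
    constructor
    · rintro (h | ⟨h1, _⟩ | ⟨h1, _⟩)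
      exacts [h, absurd h1 (by omega), absurd h1 (by omega)]
    · exact Or.inl
  have hL'on : ∀ le, L'.on le ↔ (OnPathVV u w' le ∨ (z.length = i + 2 ∧ le = z)) := by
    intro le
    show (OnPathVV (stripD i u) (stripD i z) le ∨
      (u.length = i + 2 ∧ le = u) ∨ (z.length = i + 2 ∧ le = z)) ↔ _
    rw [hsu, ← hw'def]
    constructor
    · rintro (h | ⟨h1, _⟩ | h2)
      exacts [Or.inl h, absurd h1 (by omega), Or.inr h2]
    · rintro (h | h2)
      exacts [Or.inl h, Or.inr (Or.inr h2)]
  have honincl : ∀ le, L.on le → L'.on le := by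
    intro le hle
    rw [hL'on]
    rw [hLon] at hle
    left
    by_cases hP : u.take 2 = v.take 2
    · rw [OnPathVV, if_pos hP] at hle
      rw [OnPathVV, if_pos (by rw [hw'2]; exact hP), hcw']
      exact ⟨hle.1.imp id (fun hh => hh.trans hvw'), hle.2⟩
    · rw [OnPathVV, if_neg hP] at hle
      rw [OnPathVV, if_neg (by rw [hw'2]; exact hP)]
      rcases hle with ⟨hh, h3⟩ | h2
      · exact Or.inl ⟨hh.imp id (fun t => t.trans hvw'), h3⟩
      · exact Or.inr h2
  have hlab' : L'.IsLabeled C := by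
    intro le hle hon
    rw [hL'on] at hon
    rcases hon with h | ⟨_, hz'⟩
    · by_cases hP : u.take 2 = v.take 2
      · rw [OnPathVV, if_pos (by rw [hw'2]; exact hP), hcw'] at h
        obtain ⟨h1, h2⟩ := h
        rcases h1 with h1 | h1
        · exact hmax.1 le hle ((hLon le).mpr (by rw [OnPathVV, if_pos hP]; exact ⟨Or.inl h1, h2⟩))
        · rcases Nat.lt_or_ge v.length le.length with h' | h'
          · exact hmid le h1 h'
          · have hlv : le <+: v := List.prefix_of_prefix_length_le h1 hvw' h'
            exact hmax.1 le hle
              ((hLon le).mpr (by rw [OnPathVV, if_pos hP]; exact ⟨Or.inr hlv, h2⟩))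
      · rw [OnPathVV, if_neg (by rw [hw'2]; exact hP)] at h
        rcases h with ⟨h1, h3⟩ | h2
        · rcases h1 with h1 | h1
          · exact hmax.1 le hle
              ((hLon le).mpr (by rw [OnPathVV, if_neg hP]; exact Or.inl ⟨Or.inl h1, h3⟩))
          · rcases Nat.lt_or_ge v.length le.length with h' | h'
            · exact hmid le h1 h'
            · have hlv : le <+: v := List.prefix_of_prefix_length_le h1 hvw' h'
              exact hmax.1 le hle
                ((hLon le).mpr (by rw [OnPathVV, if_neg hP]; exact Or.inl ⟨Or.inr hlv, h3⟩))
        · exact hmax.1 le hle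
            ((hLon le).mpr (by rw [OnPathVV, if_neg hP]; exact Or.inr h2))
    · rw [hz']; exact hCz
  have hfin : L'.len ≤ L.len := hmax.2 L' hlab' honincl
  have hLlen : L.len = treeDist u v := by
    show treeDist (stripD i u) (stripD i v) + (if u.length = i + 2 then 1 else 0) +
      (if v.length = i + 2 then 1 else 0) = _
    rw [hsu, hsv, if_neg (by omega), if_neg (by omega)]
    omega
  have hL'len : L'.len = treeDist u w' + ifz := by
    show treeDist (stripD i u) (stripD i z) + (if u.length = i + 2 then 1 else 0) +
      (if z.length = i + 2 then 1 else 0) = _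
    rw [hsu, ← hw'def, if_neg (by omega), ← hifzdef]
    omega
  rw [hLlen, hL'len, treeDist, treeDist] at hfin
  by_cases hP : u.take 2 = v.take 2
  · rw [if_pos hP, if_pos (by rw [hw'2]; exact hP), hcw', ← hcdef] at hfin
    omega
  · rw [if_neg hP, if_neg (by rw [hw'2]; exact hP)] at hfin
    omega

end MainConstruction

/-- **Lemma (edges below a maximal labeled link).** -/
theorem maximal_link_children_unlabeled (d : ℕ) (hd : 3 ≤ d) (s : V d → ZMod 2)
    (a b : V d) (hab : (Toric d).Adj a b) (i : ℕ)
    (C : List (V d) → ZMod 2) (hC : IsConfig d a b i s C)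
    (L : Link d a b i s) (hmax : L.IsMaxLabeled C) (hprop : L.Proper) :
    2 ≤ Nat.card {le : List (V d) //
        IsTreeEdge d a b i le ∧ le.dropLast = L.endB ∧ C le = 0} := by
  classical
  haveI : NeZero d := ⟨by omega⟩
  set u := L.endA with hudef
  set v := L.endB with hvdef
  have hu := hprop.1
  have hv := hprop.2
  have hul2 : 2 ≤ u.length := hu.2.2.1
  have hvl2 : 2 ≤ v.length := hv.2.2.1
  have hEA : L.endA.length = u.length := rfl
  have hEB : L.endB.length = v.length := rfl
  set ℓ : V d := v[v.length - 1]'(by omega) with hldef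
  set p : V d := v[v.length - 2]'(by omega) with hpdef
  have hℓp : (Toric d).Adj ℓ p := by
    have hch := hv.1.1
    simp only [List.Chain', List.isChain_iff_getElem] at hch
    have h := hch (v.length - 2) (by omega)
    simp only [show v.length - 2 + 1 = v.length - 1 from by omega] at h
    exact h.symm
  set fv : V d := if h : v.length < u.length then u[v.length]'h else p with hfvdef
  have hinj := addDir_injective hd ℓ
  have hcard2 : 1 < (Finset.univ.filter
      (fun j : Fin 4 => ¬ (ℓ + dirVec d j = p ∨ ℓ + dirVec d j = fv))).card := by
    have hone : ∀ y : V d,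
        (Finset.univ.filter (fun j : Fin 4 => ℓ + dirVec d j = y)).card ≤ 1 := by
      intro y
      refine Finset.card_le_one.mpr ?_
      intro j1 h1 j2 h2
      simp only [Finset.mem_filter] at h1 h2
      exact hinj (h1.2.trans h2.2.symm)
    have hsub : (Finset.univ.filter
        (fun j : Fin 4 => ℓ + dirVec d j = p ∨ ℓ + dirVec d j = fv)) ⊆
        (Finset.univ.filter (fun j : Fin 4 => ℓ + dirVec d j = p)) ∪
        (Finset.univ.filter (fun j : Fin 4 => ℓ + dirVec d j = fv)) := by
      intro j hj
      simp only [Finset.mem_filter, Finset.mem_union, Finset.mem_univ, true_and] at *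
      exact hj
    have hc1 : (Finset.univ.filter
        (fun j : Fin 4 => ℓ + dirVec d j = p ∨ ℓ + dirVec d j = fv)).card ≤ 2 := by
      refine le_trans (Finset.card_le_card hsub) (le_trans (Finset.card_union_le _ _) ?_)
      calc _ ≤ 1 + 1 := Nat.add_le_add (hone p) (hone fv)
      _ = 2 := rfl
    have htot := Finset.card_filter_add_card_filter_not
      (s := (Finset.univ : Finset (Fin 4)))
      (p := fun j : Fin 4 => ℓ + dirVec d j = p ∨ ℓ + dirVec d j = fv)
    simp only [Finset.card_univ, Fintype.card_fin] at htot
    omega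
  obtain ⟨j1, hj1, j2, hj2, hj12⟩ := Finset.one_lt_card.mp hcard2
  simp only [Finset.mem_filter, Finset.mem_univ, true_and, not_or] at hj1 hj2
  set x1 := ℓ + dirVec d j1 with hx1def
  set x2 := ℓ + dirVec d j2 with hx2def
  have hx12 : x1 ≠ x2 := fun h => hj12 (hinj h)
  have he1 : IsTreeEdge d a b i (v ++ [x1]) := child_edge hv (adj_add_dir hd ℓ j1) hj1.1
  have he2 : IsTreeEdge d a b i (v ++ [x2]) := child_edge hv (adj_add_dir hd ℓ j2) hj2.1
  have key : ∀ (x : V d) (j : Fin 4), x = ℓ + dirVec d j → x ≠ fv →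
      IsTreeEdge d a b i (v ++ [x]) → C (v ++ [x]) = 0 := by
    intro x j hxj hxfv he
    by_contra hcon
    have h1 : C (v ++ [x]) = 1 := by
      have hz : ∀ t : ZMod 2, t ≠ 0 → t = 1 := by decide
      exact hz _ hcon
    refine no_labeled_child hC L hmax hprop he h1 ?_
    intro hpre
    have hlen : v.length < u.length := by
      have := hpre.length_le; simp at this; omega
    have hfv : fv = u[v.length]'hlen := by rw [hfvdef, dif_pos hlen]
    have hconcat : (v ++ [x])[v.length]'(by simp) = x :=
      List.getElem_concat_length rfl (by simp)
    have hg : (v ++ [x])[v.length]'(by simp) = u[v.length]'hlen :=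
      hpre.getElem (by simp; exact le_rfl)
    exact hxfv ((hconcat.symm.trans hg).trans hfv.symm)
  have hC1 : C (v ++ [x1]) = 0 := key x1 j1 hx1def hj1.2 he1
  have hC2 : C (v ++ [x2]) = 0 := key x2 j2 hx2def hj2.2 he2
  haveI hfinite : Finite {le : List (V d) //
      IsTreeEdge d a b i le ∧ le.dropLast = v ∧ C le = 0} := by
    refine Finite.of_injective (fun le => (le.val.getLast? : Option (V d))) ?_
    intro le1 le2 h
    have h' : le1.val.getLast? = le2.val.getLast? := h
    apply Subtype.ext
    have e1 := eq_dropLast_append le1.val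
    have e2 := eq_dropLast_append le2.val
    rw [le1.2.2.1, h'] at e1
    rw [le2.2.2.1] at e2
    exact e1.trans e2.symm
  haveI : Fintype {le : List (V d) //
      IsTreeEdge d a b i le ∧ le.dropLast = v ∧ C le = 0} := Fintype.ofFinite _
  rw [Nat.card_eq_fintype_card]
  refine Fintype.one_lt_card_iff_nontrivial.mpr ?_
  refine ⟨⟨⟨v ++ [x1], he1, List.dropLast_concat, hC1⟩,
    ⟨v ++ [x2], he2, List.dropLast_concat, hC2⟩, ?_⟩⟩
  intro hcon
  rw [Subtype.ext_iff] at hcon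
  simp only at hcon
  exact hx12 (by simpa using List.append_cancel_left hcon)

end ToricMS
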